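/- arXiv:0809.0835 — 6 statements merged into one kernel-verified Lean document; each statement's English description precedes it below -/
import Mathlib

section
/- Let d ≥ 1, and for each k in a finite index set let C_k ⊆ {1,…,d}. Define the box A_k = ∏_{i=1}^d [0, q_i^{(k)}] ⊆ ℝ^d where q_i^{(k)} = 1 if i ∈ C_k and q_i^{(k)} = 2 otherwise. For x ∈ {0,1}^d let U_x = ∏_{i=1}^d [x_i, x_i + 1]. Then U_x ⊆ ⋃_k A_k if and only if there exists a k such that x_i = 0 for all i ∈ C_k (i.e., x satisfies the monotone DNF ⋁_k ⋀_{i∈C_k} ¬x_i). -/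
/-!
All boxes `A_k` have their lower corner at the origin, so a cube with nonnegative lower corner
lies in `⋃ k, A_k` as soon as its top corner `x + 1` lies in one `A_k`; conversely that corner is a
point of the cube. Coordinatewise, `x_i + 1 ≤ q_i^{(k)}` says exactly that `x_i = 0` whenever
`i ∈ C_k`.
-/

open Set

theorem Set.Icc_subset_iUnion_Icc_iff {α ι : Type*} [Preorder α] {a b c : α} {q : ι → α}
    (hca : c ≤ a) (hab : a ≤ b) :
    Icc a b ⊆ ⋃ k, Icc c (q k) ↔ ∃ k, b ≤ q k := by
  constructor
  · intro h
    obtain ⟨k, hk⟩ := mem_iUnion.1 (h (right_mem_Icc.2 hab))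
    exact ⟨k, hk.2⟩
  · rintro ⟨k, hbq⟩ y ⟨hay, hyb⟩
    exact mem_iUnion.2 ⟨k, hca.trans hay, hyb.trans hbq⟩

theorem bit_add_one_le_side_iff (b : Bool) (p : Prop) [Decidable p] :
    ((if b then 1 else 0) : ℝ) + 1 ≤ (if p then 1 else 2) ↔ (p → b = false) := by
  by_cases hp : p <;> cases b <;> norm_num [hp]

theorem stmt0_general (d n : ℕ) (C : Fin n → Finset (Fin d))
    (x : Fin d → Bool) :
    (Set.univ.pi (fun i : Fin d =>
        Set.Icc ((if x i then 1 else 0) : ℝ) ((if x i then 1 else 0) + 1)))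
      ⊆ ⋃ k : Fin n, Set.univ.pi (fun i : Fin d =>
        Set.Icc (0 : ℝ) (if i ∈ C k then 1 else 2))
    ↔ ∃ k : Fin n, ∀ i ∈ C k, x i = false := by
  have hcorner : (fun _ => 0 : Fin d → ℝ) ≤ fun i => if x i then 1 else 0 := fun i => by
    dsimp only
    split_ifs <;> norm_num
  simp_rw [pi_univ_Icc]
  rw [Icc_subset_iUnion_Icc_iff hcorner fun i => le_add_of_nonneg_right zero_le_one]
  simp only [Pi.le_def, bit_add_one_le_side_iff]

theorem stmt0 (d n : ℕ) (hd : 1 ≤ d) (C : Fin n → Finset (Fin d))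
    (x : Fin d → Bool) :
    (Set.univ.pi (fun i : Fin d =>
        Set.Icc ((if x i then 1 else 0) : ℝ) ((if x i then 1 else 0) + 1)))
      ⊆ ⋃ k : Fin n, Set.univ.pi (fun i : Fin d =>
        Set.Icc (0 : ℝ) (if i ∈ C k then 1 else 2))
    ↔ ∃ k : Fin n, ∀ i ∈ C k, x i = false :=
  stmt0_general d n C x
end

section
/- With the setup of the reduction from #MON-CNF to Klee's measure problem (boxes A_k = ∏_{i=1}^d [0, q_i^{(k)}] with q_i^{(k)} = 1 if i ∈ C_k and 2 otherwise), the Lebesgue measure of ⋃_{k=1}^n A_k equals the number of points x ∈ {0,1}^d such that for some k, x_i = 0 for all i ∈ C_k. -/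
/-!
Each box `∏ [0, q_i]` with `q_i ∈ {1, 2}` is the union of the unit cubes `U_x` with `x_i = 0`
whenever `q_i = 1`, so `⋃ A_k` is the union of the cubes `U_x` over the satisfying `x`.
Distinct unit cubes meet in a null set, hence the volume of such a union counts its cubes.
-/

open Set MeasureTheory

section UnitCube

variable {ι : Type*}

def unitCube (x : ι → Bool) : Set (ι → ℝ) :=
  univ.pi fun i => Icc ((x i).toNat : ℝ) ((x i).toNat + 1)

lemma volume_unitCube [Fintype ι] (x : ι → Bool) : volume (unitCube x) = 1 := by
  rw [unitCube, volume_pi_pi]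
  simp [Real.volume_Icc]

lemma volume_Icc_inter_Icc_of_ne {b c : Bool} (h : b ≠ c) :
    volume (Icc (b.toNat : ℝ) (b.toNat + 1) ∩ Icc (c.toNat : ℝ) (c.toNat + 1)) = 0 := by
  cases b <;> cases c <;> simp_all [Icc_inter_Icc]

lemma aedisjoint_unitCube [Fintype ι] {x y : ι → Bool} (h : x ≠ y) :
    AEDisjoint volume (unitCube x) (unitCube y) := by
  obtain ⟨i, hi⟩ := Function.ne_iff.mp h
  rw [AEDisjoint, unitCube, unitCube, ← pi_inter_distrib, volume_pi_pi]
  exact Finset.prod_eq_zero (Finset.mem_univ i) (volume_Icc_inter_Icc_of_ne hi)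

lemma volume_biUnion_unitCube [Fintype ι] (S : Set (ι → Bool)) :
    volume (⋃ x ∈ S, unitCube x) = Nat.card S := by
  obtain ⟨s, rfl⟩ := S.toFinite.exists_finset_coe
  rw [Finset.set_biUnion_coe, measure_biUnion_finset₀
    (fun x _ y _ hxy => aedisjoint_unitCube hxy)
    (fun x _ => (MeasurableSet.univ_pi fun _ => measurableSet_Icc).nullMeasurableSet)]
  simp [volume_unitCube]

lemma mem_Icc_zero_ite_iff (p : Prop) [Decidable p] (t : ℝ) :
    t ∈ Icc (0 : ℝ) (if p then 1 else 2) ↔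
      ∃ b : Bool, (p → b = false) ∧ t ∈ Icc (b.toNat : ℝ) (b.toNat + 1) := by
  constructor
  · rintro ⟨h0, h1⟩
    by_cases ht : t ≤ 1
    · exact ⟨false, fun _ => rfl, by simp [h0, ht]⟩
    · have h2 : t ≤ 2 := by split_ifs at h1 <;> linarith
      refine ⟨true, fun hp => absurd (by simpa [hp] using h1) ht, ?_⟩
      simp only [Bool.toNat_true, Nat.cast_one, mem_Icc]
      constructor <;> linarith
  · rintro ⟨b, hb, h0, h1⟩
    cases b <;> by_cases hp : p <;> simp_all <;> (try constructor) <;> linarith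

lemma pi_Icc_zero_ite_eq_biUnion_unitCube [DecidableEq ι] (s : Finset ι) :
    univ.pi (fun i => Icc (0 : ℝ) (if i ∈ s then 1 else 2)) =
      ⋃ x ∈ {x : ι → Bool | ∀ i ∈ s, x i = false}, unitCube x := by
  ext y
  simp only [mem_univ_pi, mem_Icc_zero_ite_iff, Classical.skolem, mem_iUnion, unitCube,
    mem_ofPred_eq, exists_prop, forall_and]

end UnitCube

theorem stmt1_general (d n : ℕ)
    (C : Fin n → Finset (Fin d)) :
    volume (⋃ k : Fin n, Set.univ.pi (fun i : Fin d =>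
        Set.Icc (0 : ℝ) (if i ∈ C k then 1 else 2)))
      = Nat.card {x : Fin d → Bool | ∃ k : Fin n, ∀ i ∈ C k, x i = false} := by
  simp_rw [pi_Icc_zero_ite_eq_biUnion_unitCube, ← biUnion_iUnion, ← ofPred_exists]
  exact volume_biUnion_unitCube _

theorem stmt1 (d n : ℕ) (hd : 1 ≤ d) (hn : 1 ≤ n)
    (C : Fin n → Finset (Fin d)) (hC : ∀ k, (C k).Nonempty) :
    volume (⋃ k : Fin n, Set.univ.pi (fun i : Fin d =>
        Set.Icc (0 : ℝ) (if i ∈ C k then 1 else 2)))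
      = Nat.card {x : Fin d → Bool | ∃ k : Fin n, ∀ i ∈ C k, x i = false} :=
  stmt1_general d n C
end

section
/- Let d ≥ 1 and for k = 1,…,n let p_k ∈ [0,1]^d be defined by p_i^{(k)} = 1/2 if i ∈ C_k and p_i^{(k)} = 1 otherwise, where C_k ⊆ {1,…,d}. Define B_{p_k} = ∏_{i=1}^d [0, p_i^{(k)}] and the co-box co-B_{p_k} = [0,1]^d \ B_{p_k}. For x ∈ {0,1}^d let U_x = ∏_{i=1}^d [x_i/2, (x_i+1)/2]. Then (up to a set of measure zero) U_x ⊆ ⋂_{k=1}^n co-B_{p_k} if and only if x satisfies the monotone CNF formula ⋀_{k=1}^n ⋁_{i∈C_k} x_i, i.e., for every k there is i ∈ C_k with x_i = 1. -/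
/-!
The open cell `U_x` is a product of open intervals `(x_i/2, (x_i+1)/2)` inside `[0,1]^d`, and
such a product misses the box `B_p = ∏ [0, p_i]` exactly when one coordinate interval lies above
`p_i`. For `p = p_k` this happens only at some `i ∈ C_k` with `x_i = 1`, where the cell is
`(1/2, 1)` and `p_i = 1/2`.
-/

open Set

theorem interior_univ_pi_Icc {ι α : Type*} [Finite ι] [TopologicalSpace α] [LinearOrder α]
    [OrderTopology α] [DenselyOrdered α] [NoMinOrder α] [NoMaxOrder α] (a b : ι → α) :
    interior (univ.pi fun i => Icc (a i) (b i)) = univ.pi fun i => Ioo (a i) (b i) := by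
  simp only [interior_pi_set finite_univ, interior_Icc]

theorem Ioo_disjoint_Icc_iff {α : Type*} [LinearOrder α] [DenselyOrdered α] {a b c e : α}
    (hca : c ≤ a) (hab : a < b) : Disjoint (Ioo a b) (Icc c e) ↔ e ≤ a := by
  refine ⟨fun h => ?_, fun hea => disjoint_left.2 fun z hz hz' => (hz'.2.trans hea).not_gt hz.1⟩
  by_contra! hae
  obtain ⟨z, haz, hz⟩ := exists_between (lt_min hab hae)
  exact disjoint_left.1 h ⟨haz, hz.trans_le (min_le_left _ _)⟩
    ⟨hca.trans haz.le, hz.le.trans (min_le_right _ _)⟩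

theorem univ_pi_Ioo_disjoint_univ_pi_Icc_iff {ι α : Type*} [LinearOrder α] [DenselyOrdered α]
    {a b c e : ι → α} (hca : ∀ i, c i ≤ a i) (hab : ∀ i, a i < b i) :
    Disjoint (univ.pi fun i => Ioo (a i) (b i)) (univ.pi fun i => Icc (c i) (e i)) ↔
      ∃ i, e i ≤ a i := by
  simp only [disjoint_univ_pi, Ioo_disjoint_Icc_iff (hca _) (hab _)]

theorem half_or_one_le_half_indicator_iff (P : Prop) [Decidable P] (b : Bool) :
    ((if P then 1 / 2 else 1 : ℝ) ≤ (if b then 1 else 0) / 2) ↔ P ∧ b = true := by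
  by_cases hP : P <;> cases b <;> norm_num [hP]

theorem stmt2_general (d n : ℕ) (C : Fin n → Finset (Fin d))
    (x : Fin d → Bool) :
    interior (Set.univ.pi (fun i : Fin d =>
        Set.Icc (((if x i then 1 else 0) : ℝ) / 2) (((if x i then 1 else 0) + 1) / 2)))
      ⊆ ⋂ k : Fin n,
          (Set.univ.pi (fun _ : Fin d => Set.Icc (0 : ℝ) 1) \
           Set.univ.pi (fun i : Fin d =>
             Set.Icc (0 : ℝ) (if i ∈ C k then 1/2 else 1)))
    ↔ ∀ k : Fin n, ∃ i ∈ C k, x i = true := by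
  set t : Fin d → ℝ := fun i => if x i then 1 else 0
  have ht : ∀ i, 0 ≤ t i ∧ t i ≤ 1 := fun i => by by_cases hx : x i <;> simp [t, hx]
  have h_cube : (univ.pi fun i => Ioo (t i / 2) ((t i + 1) / 2)) ⊆ univ.pi fun _ => Icc 0 1 :=
    pi_mono fun i _ => Ioo_subset_Icc_self.trans
      (Icc_subset_Icc (by linarith [ht i]) (by linarith [ht i]))
  rw [interior_univ_pi_Icc, subset_iInter_iff]
  refine forall_congr' fun k => ?_
  rw [subset_sdiff, univ_pi_Ioo_disjoint_univ_pi_Icc_iff (fun i => by linarith [ht i])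
    (fun i => by linarith)]
  simp only [t, half_or_one_le_half_indicator_iff, h_cube, true_and]

theorem stmt2 (d n : ℕ) (hd : 1 ≤ d) (C : Fin n → Finset (Fin d))
    (x : Fin d → Bool) :
    interior (Set.univ.pi (fun i : Fin d =>
        Set.Icc (((if x i then 1 else 0) : ℝ) / 2) (((if x i then 1 else 0) + 1) / 2)))
      ⊆ ⋂ k : Fin n,
          (Set.univ.pi (fun _ : Fin d => Set.Icc (0 : ℝ) 1) \
           Set.univ.pi (fun i : Fin d =>
             Set.Icc (0 : ℝ) (if i ∈ C k then 1/2 else 1)))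
    ↔ ∀ k : Fin n, ∃ i ∈ C k, x i = true :=
  stmt2_general d n C x
end

section
/- With the co-box construction of the previous statement, 2^d times the Lebesgue measure of ⋂_{k=1}^n co-B_{p_k} equals the number of satisfying assignments of the monotone CNF formula ⋀_{k=1}^n ⋁_{i∈C_k} x_i over {0,1}^d. -/
/-!
Split the unit cube into the `2 ^ d` cells of side `1/2`, the cell of `x ∈ {0,1}^d` consisting of
the points whose `i`-th coordinate exceeds `1/2` exactly when `x i = 1`. A point of the cell of `x`
lies outside `B_{p_k}` iff one of its coordinates in `C_k` exceeds `1/2`, i.e. iff `x` satisfies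
the clause `C_k`. Hence `⋂ k, co-B_{p_k}` is the disjoint union of the cells of the satisfying
assignments, each of volume `2 ^ (-d)`.
-/

open Set MeasureTheory

variable {ι : Type*}

-- Half-open on the upper halves, so that the cells partition the unit cube.
def dyadicCell (x : ι → Bool) : Set (ι → ℝ) :=
  univ.pi fun i => if x i then Ioc (1 / 2) 1 else Icc 0 (1 / 2)

theorem mem_dyadicCell_iff {x : ι → Bool} {y : ι → ℝ} :
    y ∈ dyadicCell x ↔
      y ∈ univ.pi (fun _ => Icc (0 : ℝ) 1) ∧ x = fun i => decide (1 / 2 < y i) := by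
  rw [funext_iff, dyadicCell, mem_univ_pi, mem_univ_pi, ← forall_and]
  refine forall_congr' fun i => ?_
  cases x i
  · simp only [mem_Icc, Bool.false_eq, decide_eq_false_iff_not, not_lt]
    exact ⟨fun ⟨h0, h⟩ => ⟨⟨h0, by linarith⟩, h⟩, fun ⟨⟨h0, _⟩, h⟩ => ⟨h0, h⟩⟩
  · simp only [ite_true, mem_Ioc, mem_Icc, Bool.true_eq, decide_eq_true_eq]
    exact ⟨fun ⟨h, h1⟩ => ⟨⟨by linarith, h1⟩, h⟩, fun ⟨⟨_, h1⟩, h⟩ => ⟨h, h1⟩⟩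

theorem pairwiseDisjoint_dyadicCell (s : Set (ι → Bool)) : s.PairwiseDisjoint dyadicCell :=
  fun _ _ _ _ hxx' => disjoint_left.mpr fun _ hx hx' =>
    hxx' ((mem_dyadicCell_iff.mp hx).2.trans (mem_dyadicCell_iff.mp hx').2.symm)

theorem measurableSet_dyadicCell [Countable ι] (x : ι → Bool) : MeasurableSet (dyadicCell x) :=
  .univ_pi fun i => by cases x i <;> simp [measurableSet_Icc, measurableSet_Ioc]

theorem volume_dyadicCell [Fintype ι] (x : ι → Bool) :
    volume (dyadicCell x) = 2⁻¹ ^ Fintype.card ι := by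
  have half : ENNReal.ofReal (1 / 2) = 2⁻¹ := by
    rw [one_div, ENNReal.ofReal_inv_of_pos two_pos, ENNReal.ofReal_ofNat]
  rw [dyadicCell, volume_pi_pi, ← Finset.card_univ, ← Finset.prod_const]
  refine Finset.prod_congr rfl fun i _ => ?_
  cases x i <;> norm_num [Real.volume_Ioc, Real.volume_Icc, half]

theorem volume_biUnion_dyadicCell [Fintype ι] (s : Set (ι → Bool)) :
    volume (⋃ x ∈ s, dyadicCell x) = Nat.card s * 2⁻¹ ^ Fintype.card ι := by
  classical
  have hs : (⋃ x ∈ s, dyadicCell x) = ⋃ x ∈ s.toFinset, dyadicCell x := by simp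
  rw [hs, measure_biUnion_finset (by simpa using pairwiseDisjoint_dyadicCell s)
    fun x _ => measurableSet_dyadicCell x]
  simp [volume_dyadicCell]

theorem notMem_box_iff_of_mem_dyadicCell [DecidableEq ι] {x : ι → Bool} {y : ι → ℝ}
    (hy : y ∈ dyadicCell x) (C : Finset ι) :
    y ∉ univ.pi (fun i => Icc (0 : ℝ) (if i ∈ C then 1 / 2 else 1)) ↔ ∃ i ∈ C, x i = true := by
  obtain ⟨hcube, rfl⟩ := mem_dyadicCell_iff.mp hy
  simp only [mem_univ_pi, mem_Icc] at hcube
  simp only [mem_univ_pi, mem_Icc, not_forall, decide_eq_true_eq]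
  constructor
  · rintro ⟨i, hi⟩
    by_cases hiC : i ∈ C
    · exact ⟨i, hiC, by simp only [hiC, ite_true, not_and, not_le] at hi; exact hi (hcube i).1⟩
    · exact absurd (by simpa [hiC] using hcube i) hi
  · rintro ⟨i, hiC, hi⟩
    exact ⟨i, by simp only [hiC, ite_true]; intro h; linarith [h.2]⟩

theorem iInter_cube_diff_box_eq_biUnion_dyadicCell [DecidableEq ι] {κ : Type*} [Nonempty κ]
    (C : κ → Finset ι) :
    ⋂ k, (univ.pi (fun _ : ι => Icc (0 : ℝ) 1) \
        univ.pi (fun i => Icc (0 : ℝ) (if i ∈ C k then 1 / 2 else 1))) =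
      ⋃ x ∈ {x : ι → Bool | ∀ k, ∃ i ∈ C k, x i = true}, dyadicCell x := by
  ext y
  simp only [mem_iInter, mem_sdiff, mem_iUnion₂, mem_ofPred_eq, exists_prop]
  constructor
  · intro h
    have hy : y ∈ dyadicCell fun i => decide (1 / 2 < y i) :=
      mem_dyadicCell_iff.mpr ⟨(h (Classical.arbitrary κ)).1, rfl⟩
    exact ⟨_, fun k => (notMem_box_iff_of_mem_dyadicCell hy (C k)).mp (h k).2, hy⟩
  · rintro ⟨x, hx, hy⟩ k
    exact ⟨(mem_dyadicCell_iff.mp hy).1, (notMem_box_iff_of_mem_dyadicCell hy (C k)).mpr (hx k)⟩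

theorem stmt3_general (d n : ℕ) (hn : 1 ≤ n)
    (C : Fin n → Finset (Fin d)) :
    2 ^ d * volume (⋂ k : Fin n,
        (Set.univ.pi (fun _ : Fin d => Set.Icc (0 : ℝ) 1) \
         Set.univ.pi (fun i : Fin d =>
           Set.Icc (0 : ℝ) (if i ∈ C k then 1/2 else 1))))
      = Nat.card {x : Fin d → Bool | ∀ k : Fin n, ∃ i ∈ C k, x i = true} := by
  have : Nonempty (Fin n) := Fin.pos_iff_nonempty.mp hn
  rw [iInter_cube_diff_box_eq_biUnion_dyadicCell, volume_biUnion_dyadicCell, Fintype.card_fin,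
    mul_left_comm, ← mul_pow, ENNReal.mul_inv_cancel two_ne_zero ENNReal.ofNat_ne_top, one_pow,
    mul_one]

theorem stmt3 (d n : ℕ) (hd : 1 ≤ d) (hn : 1 ≤ n)
    (C : Fin n → Finset (Fin d)) (hC : ∀ k, (C k).Nonempty) :
    2 ^ d * volume (⋂ k : Fin n,
        (Set.univ.pi (fun _ : Fin d => Set.Icc (0 : ℝ) 1) \
         Set.univ.pi (fun i : Fin d =>
           Set.Icc (0 : ℝ) (if i ∈ C k then 1/2 else 1))))
      = Nat.card {x : Fin d → Bool | ∀ k : Fin n, ∃ i ∈ C k, x i = true} :=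
  stmt3_general d n hn C
end

section
/- Let n ≥ 1 be an integer and 0 < ε < 1. Set ε_V = ε_S = ε²/(47n), ε_P = ε²/(47n²), C̃ = (1+ε_S)(1+ε_V)(1+n·ε_P) / ((1−ε_V)(1−ε_P)), and ε̃ = (ε − ε_V)/(1 + ε_V). Then ε > ε_V + 2(1+ε_V)·√(2(C̃ − 1)n), and moreover T := 24·ln(2)·(1+ε̃)·n / (ε̃² − 8(C̃ − 1)n) satisfies 0 < T ≤ 2365·n/ε². -/
/-!
Write `a = ε²/47`, so that `n ε_V = a` and `n ε_P = ε_V ≤ a ≤ 1/47`. Then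
`(C̃ - 1) n (1 - ε_V)(1 - ε_P) = 4a + ε_V + 3a ε_V + a ε_V² - ε_V² ≤ 5a + 3a² + a³`, and dividing by
`(1 - a)²` gives `8 (C̃ - 1) n ≤ (9/10) ε²`. Everything else follows from this:
`√(2 (C̃ - 1) n) ≤ (19/40) ε` yields the error condition, and `ε̃ ≥ (23/24) ε` keeps the
denominator of `T` above `ε²/58`, since `(23/24)² - 9/10 > 1/58`.
-/

noncomputable section

namespace UnionFPRAS

open Real

variable {n ε : ℝ}

/-- `ε_V = ε_S`; `probErr`, `distortion`, `effectiveErr` and `stepCount` are `ε_P`, `C̃`, `ε̃`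
and `T`. -/
def oracleErr (n ε : ℝ) : ℝ := ε ^ 2 / (47 * n)

def probErr (n ε : ℝ) : ℝ := ε ^ 2 / (47 * n ^ 2)

def distortion (n ε : ℝ) : ℝ :=
  (1 + oracleErr n ε) * (1 + oracleErr n ε) * (1 + n * probErr n ε) /
    ((1 - oracleErr n ε) * (1 - probErr n ε))

def effectiveErr (n ε : ℝ) : ℝ := (ε - oracleErr n ε) / (1 + oracleErr n ε)

def stepCount (n ε : ℝ) : ℝ :=
  24 * log 2 * (1 + effectiveErr n ε) * n / (effectiveErr n ε ^ 2 - 8 * (distortion n ε - 1) * n)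

lemma oracleErr_nonneg (hn : 0 ≤ n) : 0 ≤ oracleErr n ε := by
  unfold oracleErr; positivity

lemma probErr_nonneg : 0 ≤ probErr n ε := by
  unfold probErr; positivity

lemma oracleErr_le_sq_div (hn : 1 ≤ n) : oracleErr n ε ≤ ε ^ 2 / 47 :=
  div_le_div_of_nonneg_left (sq_nonneg ε) (by norm_num) (by linarith)

lemma probErr_le_oracleErr (hn : 1 ≤ n) : probErr n ε ≤ oracleErr n ε :=
  div_le_div_of_nonneg_left (sq_nonneg ε) (by positivity) (by nlinarith)

lemma mul_oracleErr (hn : n ≠ 0) : n * oracleErr n ε = ε ^ 2 / 47 := by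
  unfold oracleErr; field_simp

lemma mul_probErr (hn : n ≠ 0) : n * probErr n ε = oracleErr n ε := by
  unfold probErr oracleErr; field_simp

lemma eight_mul_distortion_sub_one_mul_le (hn : 1 ≤ n) (hε : ε ^ 2 ≤ 1) :
    8 * (distortion n ε - 1) * n ≤ 9 / 10 * ε ^ 2 := by
  have hn0 : n ≠ 0 := by positivity
  set a := ε ^ 2 / 47 with ha
  set A := oracleErr n ε
  set B := probErr n ε
  have ha0 : 0 ≤ a := by positivity
  have ha1 : a ≤ 1 / 47 := by rw [ha]; linarith
  have hA : A ≤ a := oracleErr_le_sq_div hn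
  have hA0 : 0 ≤ A := oracleErr_nonneg (by linarith)
  have hB : B ≤ A := probErr_le_oracleErr hn
  have hB0 : 0 ≤ B := probErr_nonneg
  have hnA : n * A = a := mul_oracleErr hn0
  have hnB : n * B = A := mul_probErr hn0
  have hden : (1 - a) ^ 2 ≤ (1 - A) * (1 - B) := by nlinarith
  have hden0 : 0 < (1 - A) * (1 - B) := by nlinarith
  have hexcess : (distortion n ε - 1) * n * ((1 - A) * (1 - B)) =
      4 * a + A + 3 * a * A + a * A ^ 2 - A ^ 2 := by
    unfold distortion
    rw [hnB, div_sub_one hden0.ne', div_mul_eq_mul_div, div_mul_cancel₀ _ hden0.ne']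
    linear_combination (4 + 3 * A + A ^ 2) * hnA + (1 - A) * hnB
  have hbound : 8 * (5 * a + 3 * a ^ 2 + a ^ 3) ≤ 9 / 10 * 47 * a * (1 - a) ^ 2 := by
    nlinarith [mul_nonneg ha0 (sub_nonneg.2 ha1)]
  calc 8 * (distortion n ε - 1) * n
      = 8 * (4 * a + A + 3 * a * A + a * A ^ 2 - A ^ 2) / ((1 - A) * (1 - B)) := by
        rw [eq_div_iff hden0.ne', ← hexcess]; ring
    _ ≤ 8 * (5 * a + 3 * a ^ 2 + a ^ 3) / (1 - a) ^ 2 := by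
        gcongr ?_ / ?_
        · nlinarith
        · nlinarith
    _ ≤ 9 / 10 * ε ^ 2 := by
        rw [div_le_iff₀ (by nlinarith), show ε ^ 2 = 47 * a by rw [ha]; ring]; linarith

lemma sqrt_two_mul_distortion_sub_one_mul_le (hn : 1 ≤ n) (hε0 : 0 ≤ ε) (hε : ε ^ 2 ≤ 1) :
    √(2 * (distortion n ε - 1) * n) ≤ 19 / 40 * ε := by
  rw [sqrt_le_left (by positivity)]
  nlinarith [eight_mul_distortion_sub_one_mul_le hn hε]

lemma oracleErr_le_div (hn : 1 ≤ n) (hε0 : 0 ≤ ε) (hε1 : ε ≤ 1) :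
    oracleErr n ε ≤ ε / 47 := by
  nlinarith [oracleErr_le_sq_div (ε := ε) hn]

lemma effectiveErr_le (hn : 0 ≤ n) (hε0 : 0 ≤ ε) : effectiveErr n ε ≤ ε := by
  have hA := oracleErr_nonneg (ε := ε) hn
  rw [effectiveErr, div_le_iff₀ (by linarith)]
  nlinarith

lemma le_effectiveErr (hn : 1 ≤ n) (hε0 : 0 ≤ ε) (hε1 : ε ≤ 1) :
    23 / 24 * ε ≤ effectiveErr n ε := by
  have hA := oracleErr_nonneg (ε := ε) (by linarith : 0 ≤ n)
  rw [effectiveErr, le_div_iff₀ (by linarith)]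
  nlinarith [oracleErr_le_div hn hε0 hε1]

lemma sq_div_le_effectiveErr_sq_sub (hn : 1 ≤ n) (hε0 : 0 ≤ ε) (hε1 : ε ≤ 1) :
    ε ^ 2 / 58 ≤ effectiveErr n ε ^ 2 - 8 * (distortion n ε - 1) * n := by
  have hε' := le_effectiveErr hn hε0 hε1
  nlinarith [eight_mul_distortion_sub_one_mul_le hn (by nlinarith : ε ^ 2 ≤ 1),
    mul_le_mul hε' hε' (by positivity : (0 : ℝ) ≤ 23 / 24 * ε) (by linarith)]

lemma oracleErr_add_lt (hn : 1 ≤ n) (hε0 : 0 < ε) (hε1 : ε ≤ 1) :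
    oracleErr n ε + 2 * (1 + oracleErr n ε) * √(2 * (distortion n ε - 1) * n) < ε := by
  have hA := oracleErr_le_div hn hε0.le hε1
  have hA0 : 0 ≤ 1 + oracleErr n ε := by
    linarith [oracleErr_nonneg (n := n) (ε := ε) (by linarith)]
  calc oracleErr n ε + 2 * (1 + oracleErr n ε) * √(2 * (distortion n ε - 1) * n)
      ≤ ε / 47 + 2 * (1 + 1 / 47) * (19 / 40 * ε) := by
        gcongr ?_ + 2 * (1 + ?_) * ?_
        · linarith
        · exact sqrt_two_mul_distortion_sub_one_mul_le hn hε0.le (by nlinarith)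
    _ < ε := by linarith

lemma stepCount_pos (hn : 1 ≤ n) (hε0 : 0 < ε) (hε1 : ε ≤ 1) : 0 < stepCount n ε := by
  have hden := sq_div_le_effectiveErr_sq_sub hn hε0.le hε1
  have hε' := le_effectiveErr hn hε0.le hε1
  have hlog : 0 < log 2 := log_pos one_lt_two
  have hε'1 : 0 < 1 + effectiveErr n ε := by linarith
  have hε2 : 0 < ε ^ 2 / 58 := by positivity
  unfold stepCount
  exact div_pos (by positivity) (by linarith)

lemma stepCount_le (hn : 1 ≤ n) (hε0 : 0 < ε) (hε1 : ε ≤ 1) :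
    stepCount n ε ≤ 2365 * n / ε ^ 2 := by
  have hden := sq_div_le_effectiveErr_sq_sub hn hε0.le hε1
  have hε' := le_effectiveErr hn hε0.le hε1
  have hnum : 24 * log 2 * (1 + effectiveErr n ε) ≤ 34 := by
    nlinarith [effectiveErr_le (n := n) (ε := ε) (by linarith) hε0.le, log_two_lt_d9,
      log_pos one_lt_two]
  calc stepCount n ε ≤ 34 * n / (ε ^ 2 / 58) := by
        have hlog : 0 < log 2 := log_pos one_lt_two
        have hε'1 : 0 < 1 + effectiveErr n ε := by linarith
        unfold stepCount
        gcongr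
    _ = 1972 * n / ε ^ 2 := by field_simp; ring
    _ ≤ 2365 * n / ε ^ 2 := by gcongr; norm_num

end UnionFPRAS

end

open UnionFPRAS in
theorem stmt12 (n : ℕ) (hn : 1 ≤ n) (ε : ℝ) (hε0 : 0 < ε) (hε1 : ε < 1) :
    (letI εV : ℝ := ε^2 / (47 * n)
     letI εS : ℝ := ε^2 / (47 * n)
     letI εP : ℝ := ε^2 / (47 * n^2)
     letI C : ℝ := (1 + εS) * (1 + εV) * (1 + n * εP) / ((1 - εV) * (1 - εP))
     letI ε' : ℝ := (ε - εV) / (1 + εV)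
     ε > εV + 2 * (1 + εV) * Real.sqrt (2 * (C - 1) * n) ∧
     0 < 24 * Real.log 2 * (1 + ε') * n / (ε'^2 - 8 * (C - 1) * n) ∧
     24 * Real.log 2 * (1 + ε') * n / (ε'^2 - 8 * (C - 1) * n) ≤ 2365 * n / ε^2) := by
  have hn' : (1 : ℝ) ≤ n := by exact_mod_cast hn
  show oracleErr n ε + 2 * (1 + oracleErr n ε) * √(2 * (distortion n ε - 1) * n) < ε ∧
    0 < stepCount n ε ∧ stepCount n ε ≤ 2365 * n / ε ^ 2
  exact ⟨oracleErr_add_lt hn' hε0 hε1.le, stepCount_pos hn' hε0 hε1.le,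
    stepCount_le hn' hε0 hε1.le⟩
end

section
/- Let k ∈ {1,…,n} and let t be geometric with success probability k/n (supported on {1,2,…}). Then for all 0 ≤ λ ≤ 1/2, E[e^{−λ t / n}] ≤ e^{−(λ − λ²)/k}. -/
/-!
The Laplace transform of a geometric variable with success probability `p` is the geometric
series `e^{-s} p / (1 - (1 - p) e^{-s})`, and `1 + s ≤ e^s` bounds it by `1 / (1 + s / p)`.
With `s = λ / n` and `p = k / n` this is `1 / (1 + u)` for `u = λ / k`, and
`(1 + u)(1 - u + u²) = 1 + u³ ≥ 1` together with `1 - u + u² ≤ e^{u² - u}` gives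
`1 / (1 + u) ≤ e^{-(u - u²)} ≤ e^{-(λ - λ²) / k}`.
-/

open Real

theorem hasSum_exp_neg_mul_geometric {p s : ℝ} (hp0 : 0 < p) (hp1 : p ≤ 1) (hs : 0 ≤ s) :
    HasSum (fun j : ℕ => exp (-(s * (j + 1))) * (1 - p) ^ j * p)
      (exp (-s) * p / (1 - (1 - p) * exp (-s))) := by
  have hq0 : 0 ≤ (1 - p) * exp (-s) := mul_nonneg (by linarith) (exp_pos _).le
  have hq1 : (1 - p) * exp (-s) < 1 :=
    calc (1 - p) * exp (-s) ≤ (1 - p) * 1 :=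
          mul_le_mul_of_nonneg_left (exp_le_one_iff.mpr (neg_nonpos.mpr hs)) (by linarith)
      _ < 1 := by linarith
  have hterm (j : ℕ) : exp (-(s * (j + 1))) * (1 - p) ^ j * p
      = exp (-s) * p * ((1 - p) * exp (-s)) ^ j := by
    rw [show -(s * ((j : ℝ) + 1)) = ((j + 1 : ℕ) : ℝ) * -s by push_cast; ring, exp_nat_mul,
      mul_pow, pow_succ]
    ring
  simpa only [hterm, div_eq_mul_inv] using
    (hasSum_geometric_of_lt_one hq0 hq1).mul_left (exp (-s) * p)

theorem exp_neg_mul_div_one_sub_le {p s : ℝ} (hp0 : 0 < p) (hs : 0 ≤ s) :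
    exp (-s) * p / (1 - (1 - p) * exp (-s)) ≤ (1 + s / p)⁻¹ := by
  have hr : 0 < exp (-s) := exp_pos _
  have key : exp (-s) * (1 + s) ≤ 1 := by
    rw [exp_neg]
    exact inv_mul_le_one_of_le₀ (by linarith [add_one_le_exp s]) (exp_pos s).le
  have hr1 : exp (-s) ≤ 1 := exp_le_one_iff.mpr (neg_nonpos.mpr hs)
  have hden : 0 < 1 - (1 - p) * exp (-s) := by nlinarith
  rw [div_le_iff₀ hden, ← div_eq_inv_mul, le_div_iff₀ (by positivity)]
  field_simp
  nlinarith

theorem inv_one_add_le_exp_neg_sub_sq {u : ℝ} (hu : 0 ≤ u) :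
    (1 + u)⁻¹ ≤ exp (-(u - u ^ 2)) := by
  rw [neg_sub, inv_le_iff_one_le_mul₀ (by positivity)]
  calc (1 : ℝ) ≤ (u ^ 2 - u + 1) * (1 + u) := by nlinarith [pow_nonneg hu 3]
    _ ≤ exp (u ^ 2 - u) * (1 + u) := by gcongr; exact add_one_le_exp _

theorem stmt15_general (n k : ℕ) (hk : 1 ≤ k) (hkn : k ≤ n) (lam : ℝ)
    (hl0 : 0 ≤ lam) :
    (∑' j : ℕ, Real.exp (-(lam * (j + 1) / n)) * (1 - (k : ℝ)/n)^j * ((k : ℝ)/n))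
      ≤ Real.exp (-((lam - lam^2) / k)) := by
  have hk0 : (0 : ℝ) < k := by exact_mod_cast hk
  have hn0 : (0 : ℝ) < n := by exact_mod_cast hk.trans hkn
  have hp1 : (k : ℝ) / n ≤ 1 := div_le_one_of_le₀ (by exact_mod_cast hkn) hn0.le
  have hp0 : 0 < (k : ℝ) / n := div_pos hk0 hn0
  have hs : 0 ≤ lam / n := div_nonneg hl0 hn0.le
  have hu : lam / n / (k / n) = lam / k := by field_simp
  have hsq : (lam / k) ^ 2 ≤ lam ^ 2 / k := by
    rw [div_pow]
    exact div_le_div_of_nonneg_left (sq_nonneg _) hk0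
      (le_self_pow₀ (by exact_mod_cast hk) two_ne_zero)
  calc (∑' j : ℕ, exp (-(lam * (j + 1) / n)) * (1 - (k : ℝ) / n) ^ j * ((k : ℝ) / n))
      = exp (-(lam / n)) * (k / n) / (1 - (1 - k / n) * exp (-(lam / n))) := by
        simpa only [div_mul_eq_mul_div] using (hasSum_exp_neg_mul_geometric hp0 hp1 hs).tsum_eq
    _ ≤ (1 + lam / k)⁻¹ := hu ▸ exp_neg_mul_div_one_sub_le hp0 hs
    _ ≤ exp (-(lam / k - (lam / k) ^ 2)) := inv_one_add_le_exp_neg_sub_sq (div_nonneg hl0 hk0.le)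
    _ ≤ exp (-((lam - lam ^ 2) / k)) := exp_le_exp.mpr (by rw [sub_div]; linarith)

/-- Lower-tail moment bound for the geometric variable `t` on `{1,2,…}` with
success probability `k/n`: `E[exp(-λ t/n)] ≤ exp(-(λ - λ²)/k)`. -/
theorem stmt15 (n k : ℕ) (hk : 1 ≤ k) (hkn : k ≤ n) (lam : ℝ)
    (hl0 : 0 ≤ lam) (hl1 : lam ≤ 1/2) :
    (∑' j : ℕ, Real.exp (-(lam * (j + 1) / n)) * (1 - (k : ℝ)/n)^j * ((k : ℝ)/n))
      ≤ Real.exp (-((lam - lam^2) / k)) :=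
  stmt15_general n k hk hkn lam hl0
end
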